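/- Let φ₂(u) = 1/log u + 1/(1−u) for positive u ≠ 1, extended continuously by φ₂(1) = 1/2. Then (log φ₂)'' ≥ 0 on (0,∞)\{1}, i.e. φ₂(u)·φ₂''(u) − (φ₂'(u))² ≥ 0; equivalently φ₂'/φ₂ is increasing. -/

import Mathlib

noncomputable def phi2 (u : ℝ) : ℝ :=
  if u = 1 then 1 / 2 else 1 / Real.log u + 1 / (1 - u)

/-!
Write `L = log u`. Clearing denominators, `φ₂ φ₂'' - φ₂'^2` has the sign of
`num L u = u²L⁴ - 2u²(u-1)L³ + (u+1)(u-1)²L² + (u-3)(u-1)³L + (u-1)⁴`.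
In the variable `x = log u`, the exponential polynomial `e^{-2x} num x (e^x)` vanishes to order
eight at `x = 0`, and its eighth derivative is nonnegative because `e^{±x} ≥ 1 ± x + x²/2`.
Applying the mean value theorem eight times, outwards from `0` on each side, shows that it is
nonnegative.
-/

open Real Set Filter Topology

theorem Real.exp_two_mul_eq_sq (x : ℝ) : exp (2 * x) = exp x ^ 2 := by
  simpa using exp_nat_mul x 2

theorem Real.exp_neg_two_mul_eq_inv_sq (x : ℝ) : exp (-2 * x) = (exp x ^ 2)⁻¹ := by
  rw [neg_mul, exp_neg, exp_two_mul_eq_sq]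

theorem nonneg_of_hasDerivAt_chain {f : ℕ → ℝ → ℝ} {n : ℕ}
    (hf : ∀ k < n, ∀ x, HasDerivAt (f k) (f (k + 1) x) x) (h0 : ∀ k < n, f k 0 = 0)
    (hn : ∀ x, 0 ≤ x → 0 ≤ f n x) {x : ℝ} (hx : 0 ≤ x) : 0 ≤ f 0 x := by
  induction n generalizing f x with
  | zero => exact hn x hx
  | succ n ih =>
    have hf1 : ∀ y, 0 ≤ y → 0 ≤ f 1 y := fun y hy =>
      ih (f := fun k => f (k + 1)) (fun k hk => hf (k + 1) (by omega))
        (fun k hk => h0 (k + 1) (by omega)) hn hy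
    have hmono : MonotoneOn (f 0) (Ici 0) :=
      monotoneOn_of_hasDerivWithinAt_nonneg (convex_Ici 0)
        (fun y _ => (hf 0 n.succ_pos y).continuousAt.continuousWithinAt)
        (fun y _ => (hf 0 n.succ_pos y).hasDerivWithinAt)
        (fun y hy => hf1 y (interior_subset hy))
    simpa [h0 0 n.succ_pos] using hmono self_mem_Ici hx hx

theorem nonneg_of_hasDerivAt_chain_of_even {f : ℕ → ℝ → ℝ} {n : ℕ} (hn : Even n)
    (hf : ∀ k < n, ∀ x, HasDerivAt (f k) (f (k + 1) x) x) (h0 : ∀ k < n, f k 0 = 0)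
    (hfn : ∀ x, 0 ≤ f n x) (x : ℝ) : 0 ≤ f 0 x := by
  rcases le_total 0 x with hx | hx
  · exact nonneg_of_hasDerivAt_chain hf h0 (fun y _ => hfn y) hx
  · -- the reflected chain `(-1) ^ k * f k (-y)` is again a derivative chain
    have := nonneg_of_hasDerivAt_chain (f := fun k y => (-1) ^ k * f k (-y)) (n := n)
      (fun k hk y => by
        have := ((hf k hk (-y)).comp y (hasDerivAt_neg y)).const_mul ((-1 : ℝ) ^ k)
        exact this.congr_deriv (by ring))
      (fun k hk => by simp [h0 k hk])
      (fun y _ => by simpa [hn.neg_one_pow] using hfn (-y)) (neg_nonneg.mpr hx)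
    simpa using this

namespace Phi2

def num (L u : ℝ) : ℝ :=
  u ^ 2 * L ^ 4 - 2 * u ^ 2 * (u - 1) * L ^ 3 + (u + 1) * (u - 1) ^ 2 * L ^ 2
    + (u - 3) * (u - 1) ^ 3 * L + (u - 1) ^ 4

/-- The `k`-th derivative of `x ↦ e^{-2x} num x (e^x)`, for `k ≤ 8`. -/
noncomputable def numDeriv : ℕ → ℝ → ℝ
  | 0, x => (x + 1) * exp (2 * x) + (-2 * x ^ 3 + x ^ 2 - 6 * x - 4) * exp x
      + (x ^ 4 + 2 * x ^ 3 - x ^ 2 + 12 * x + 6) + (-x ^ 2 - 10 * x - 4) * exp (-x)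
      + (x ^ 2 + 3 * x + 1) * exp (-2 * x)
  | 1, x => (2 * x + 3) * exp (2 * x) + (-2 * x ^ 3 - 5 * x ^ 2 - 4 * x - 10) * exp x
      + (4 * x ^ 3 + 6 * x ^ 2 - 2 * x + 12) + (x ^ 2 + 8 * x - 6) * exp (-x)
      + (-2 * x ^ 2 - 4 * x + 1) * exp (-2 * x)
  | 2, x => (4 * x + 8) * exp (2 * x) + (-2 * x ^ 3 - 11 * x ^ 2 - 14 * x - 14) * exp x
      + (12 * x ^ 2 + 12 * x - 2) + (-x ^ 2 - 6 * x + 14) * exp (-x)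
      + (4 * x ^ 2 + 4 * x - 6) * exp (-2 * x)
  | 3, x => (8 * x + 20) * exp (2 * x) + (-2 * x ^ 3 - 17 * x ^ 2 - 36 * x - 28) * exp x
      + (24 * x + 12) + (x ^ 2 + 4 * x - 20) * exp (-x)
      + (-8 * x ^ 2 + 16) * exp (-2 * x)
  | 4, x => (16 * x + 48) * exp (2 * x) + (-2 * x ^ 3 - 23 * x ^ 2 - 70 * x - 64) * exp x
      + 24 + (-x ^ 2 - 2 * x + 24) * exp (-x)
      + (16 * x ^ 2 - 16 * x - 32) * exp (-2 * x)
  | 5, x => (32 * x + 112) * exp (2 * x) + (-2 * x ^ 3 - 29 * x ^ 2 - 116 * x - 134) * exp x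
      + (x ^ 2 - 26) * exp (-x) + (-32 * x ^ 2 + 64 * x + 48) * exp (-2 * x)
  | 6, x => (64 * x + 256) * exp (2 * x) + (-2 * x ^ 3 - 35 * x ^ 2 - 174 * x - 250) * exp x
      + (-x ^ 2 + 2 * x + 26) * exp (-x) + (64 * x ^ 2 - 192 * x - 32) * exp (-2 * x)
  | 7, x => (128 * x + 576) * exp (2 * x) + (-2 * x ^ 3 - 41 * x ^ 2 - 244 * x - 424) * exp x
      + (x ^ 2 - 4 * x - 24) * exp (-x) + (-128 * x ^ 2 + 512 * x - 128) * exp (-2 * x)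
  | 8, x => (256 * x + 1280) * exp (2 * x) + (-2 * x ^ 3 - 47 * x ^ 2 - 326 * x - 668) * exp x
      + (-x ^ 2 + 6 * x + 20) * exp (-x) + (256 * x ^ 2 - 1280 * x + 768) * exp (-2 * x)
  | _, _ => 0

theorem hasDerivAt_numDeriv {k : ℕ} (hk : k < 8) (x : ℝ) :
    HasDerivAt (numDeriv k) (numDeriv (k + 1) x) x := by
  have h : Differentiable ℝ (numDeriv k) ∧ deriv (numDeriv k) = numDeriv (k + 1) := by
    interval_cases k <;>
    · unfold numDeriv
      refine ⟨by fun_prop, funext fun x => ?_⟩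
      simp (disch := fun_prop) only [deriv_fun_add, deriv_fun_sub, deriv_fun_mul,
        deriv_fun_pow, deriv.fun_neg', deriv_neg'', deriv_id'', deriv_const', deriv_const_mul_id',
        _root_.deriv_exp, Real.deriv_exp, neg_mul, mul_neg]
      ring_nf
  exact h.2 ▸ (h.1 x).hasDerivAt

theorem numDeriv_zero_of_lt {k : ℕ} (hk : k < 8) : numDeriv k 0 = 0 := by
  interval_cases k <;> norm_num [numDeriv]

theorem numDeriv_eight_nonneg_of_nonneg {x : ℝ} (hx : 0 ≤ x) : 0 ≤ numDeriv 8 x := by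
  have hE : 1 + x + x ^ 2 / 2 ≤ exp x := quadratic_le_exp_of_nonneg hx
  have hE1 : 1 ≤ exp x := one_le_exp hx
  have hpoly : numDeriv 8 x * exp x ^ 2 = (256 * x + 1280) * exp x ^ 4
      + (-2 * x ^ 3 - 47 * x ^ 2 - 326 * x - 668) * exp x ^ 3
      + (-x ^ 2 + 6 * x + 20) * exp x + (256 * x ^ 2 - 1280 * x + 768) := by
    simp only [numDeriv, exp_two_mul_eq_sq, exp_neg_two_mul_eq_inv_sq, exp_neg]
    field_simp
  set E := exp x
  have h1 : 0 ≤ (256 * x + 1280) * ((E - (1 + x + x ^ 2 / 2)) * E ^ 3) := by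
    have : 0 ≤ E - (1 + x + x ^ 2 / 2) := by linarith
    positivity
  have h2 : 0 ≤ (126 * x ^ 3 + 849 * x ^ 2 + 1210 * x + 612) * (E ^ 3 - E) := by
    have : 0 ≤ E ^ 3 - E := sub_nonneg.2 (le_self_pow₀ hE1 (by norm_num))
    positivity
  have h3 : 0 ≤ (126 * x ^ 3 + 848 * x ^ 2 + 1216 * x + 632) * (E - 1 - x) := by
    have : 0 ≤ E - 1 - x := by nlinarith
    positivity
  have h4 : 0 ≤ 126 * x ^ 4 + 974 * x ^ 3 + 2320 * x ^ 2 + 568 * x + 1400 := by positivity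
  exact nonneg_of_mul_nonneg_left (by linarith) (by positivity : 0 < E ^ 2)

theorem numDeriv_eight_nonneg_of_nonpos {x : ℝ} (hx : x ≤ 0) : 0 ≤ numDeriv 8 x := by
  obtain ⟨y, hy, rfl⟩ : ∃ y, 0 ≤ y ∧ x = -y := ⟨-x, by linarith, by ring⟩
  have hF : 1 + y + y ^ 2 / 2 ≤ exp y := quadratic_le_exp_of_nonneg hy
  have hF1 : 1 ≤ exp y := one_le_exp hy
  have hpoly : numDeriv 8 (-y) * exp y ^ 2 = (256 * y ^ 2 + 1280 * y + 768) * exp y ^ 4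
      + (-y ^ 2 - 6 * y + 20) * exp y ^ 3
      + (2 * y ^ 3 - 47 * y ^ 2 + 326 * y - 668) * exp y + (1280 - 256 * y) := by
    simp only [numDeriv, neg_neg, mul_neg, neg_mul, exp_neg, exp_two_mul_eq_sq]
    field_simp
    ring
  set F := exp y
  have h1 : 0 ≤ (256 * y ^ 2 + 1280 * y + 768) * ((F - (1 + y + y ^ 2 / 2)) * F ^ 3) := by
    have : 0 ≤ F - (1 + y + y ^ 2 / 2) := by linarith
    positivity
  have h2 : 0 ≤ (128 * y ^ 4 + 896 * y ^ 3 + 1919 * y ^ 2 + 2042 * y + 788) * (F ^ 3 - F) := by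
    have : 0 ≤ F ^ 3 - F := sub_nonneg.2 (le_self_pow₀ hF1 (by norm_num))
    positivity
  have h3 : 0 ≤ (128 * y ^ 4 + 898 * y ^ 3 + 1872 * y ^ 2 + 2368 * y + 120) * (F - 1 - y) := by
    have : 0 ≤ F - 1 - y := by nlinarith
    positivity
  have h4 : 0 ≤ 128 * y ^ 5 + 1026 * y ^ 4 + 2770 * y ^ 3 + 4240 * y ^ 2 + 2232 * y + 1400 := by
    positivity
  exact nonneg_of_mul_nonneg_left (by linarith) (by positivity : 0 < F ^ 2)

theorem numDeriv_eight_nonneg (x : ℝ) : 0 ≤ numDeriv 8 x :=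
  (le_total 0 x).elim numDeriv_eight_nonneg_of_nonneg numDeriv_eight_nonneg_of_nonpos

theorem numDeriv_zero_nonneg (x : ℝ) : 0 ≤ numDeriv 0 x :=
  nonneg_of_hasDerivAt_chain_of_even (f := numDeriv) (n := 8) (by decide)
    (fun _ => hasDerivAt_numDeriv) (fun _ => numDeriv_zero_of_lt) numDeriv_eight_nonneg x

theorem num_log_nonneg {u : ℝ} (hu : 0 < u) : 0 ≤ num (log u) u := by
  obtain ⟨x, rfl⟩ : ∃ x, exp x = u := ⟨log u, exp_log hu⟩
  have h : num x (exp x) = exp x ^ 2 * numDeriv 0 x := by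
    simp only [num, numDeriv, exp_two_mul_eq_sq, exp_neg_two_mul_eq_inv_sq, exp_neg]
    field_simp
    ring
  rw [log_exp, h]
  exact mul_nonneg (by positivity) (numDeriv_zero_nonneg x)

theorem phi2_eventuallyEq {u : ℝ} (hu1 : u ≠ 1) :
    phi2 =ᶠ[𝓝 u] fun v => (log v)⁻¹ + (1 - v)⁻¹ := by
  filter_upwards [isOpen_ne.mem_nhds hu1] with v hv
  simp [phi2, hv]

theorem deriv_phi2_eventuallyEq {u : ℝ} (hu : 0 < u) (hu1 : u ≠ 1) :
    deriv phi2 =ᶠ[𝓝 u] fun v => -(v * log v ^ 2)⁻¹ + ((1 - v) ^ 2)⁻¹ := by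
  filter_upwards [(isOpen_Ioi.inter isOpen_ne).mem_nhds ⟨hu, hu1⟩] with v ⟨hv, hv1⟩
  have hlog : log v ≠ 0 := log_ne_zero_of_pos_of_ne_one hv hv1
  have hsub : 1 - v ≠ 0 := sub_ne_zero.2 (Ne.symm hv1)
  rw [(phi2_eventuallyEq hv1).deriv_eq]
  have h : HasDerivAt (fun v => (log v)⁻¹ + (1 - v)⁻¹) _ v :=
    ((hasDerivAt_log hv.ne').inv hlog).add (((hasDerivAt_id' v).const_sub 1).inv hsub)
  rw [h.deriv]
  field_simp

theorem deriv_deriv_phi2 {u : ℝ} (hu : 0 < u) (hu1 : u ≠ 1) :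
    deriv (deriv phi2) u = (log u + 2) / (u ^ 2 * log u ^ 3) + 2 / (1 - u) ^ 3 := by
  have hlog : log u ≠ 0 := log_ne_zero_of_pos_of_ne_one hu hu1
  have hsub : 1 - u ≠ 0 := sub_ne_zero.2 (Ne.symm hu1)
  rw [(deriv_phi2_eventuallyEq hu hu1).deriv_eq]
  have h : HasDerivAt (fun v => -(v * log v ^ 2)⁻¹ + ((1 - v) ^ 2)⁻¹) _ u :=
    (((hasDerivAt_id' u).mul ((hasDerivAt_log hu.ne').pow 2)).inv
      (mul_ne_zero hu.ne' (pow_ne_zero 2 hlog))).neg.add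
      ((((hasDerivAt_id' u).const_sub 1).pow 2).inv (pow_ne_zero 2 hsub))
  rw [h.deriv]
  simp only [Pi.mul_apply, Pi.pow_apply]
  field_simp
  ring

theorem phi2_mul_deriv_deriv_sub_sq {u : ℝ} (hu : 0 < u) (hu1 : u ≠ 1) :
    phi2 u * deriv (deriv phi2) u - deriv phi2 u ^ 2
      = num (log u) u / (u ^ 2 * log u ^ 4 * (1 - u) ^ 4) := by
  have hlog : log u ≠ 0 := log_ne_zero_of_pos_of_ne_one hu hu1
  have hsub : 1 - u ≠ 0 := sub_ne_zero.2 (Ne.symm hu1)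
  rw [(phi2_eventuallyEq hu1).eq_of_nhds, (deriv_phi2_eventuallyEq hu hu1).eq_of_nhds,
    deriv_deriv_phi2 hu hu1, num]
  field_simp
  ring

end Phi2

theorem stmt_13 (u : ℝ) (hu : 0 < u) (hu1 : u ≠ 1) :
    0 ≤ phi2 u * deriv (deriv phi2) u - (deriv phi2 u) ^ 2 := by
  rw [Phi2.phi2_mul_deriv_deriv_sub_sq hu hu1]
  exact div_nonneg (Phi2.num_log_nonneg hu) (by positivity)
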